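/- arXiv:1808.04732 — 8 statements merged into one kernel-verified Lean document; each statement's English description precedes it below -/
import Mathlib

section
/- Let T and S be perfect trees. If there exists a perfect tree contained in T ∩ S, then the meet T ∧ S (the union of all perfect trees contained in T ∩ S) is itself a perfect tree, T ∧ S ⊆ T ∩ S, and every perfect tree contained in T ∩ S is contained in T ∧ S; that is, T ∧ S is the maximal perfect tree contained in T ∩ S. -/
/-- A tree: a set of finite binary strings closed under initial segments (prefixes). -/
def IsTree (T : Set (List Bool)) : Prop :=
  ∀ ⦃s t : List Bool⦄, s <+: t → t ∈ T → s ∈ T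

/-- A node `t` splits in a set `A` of strings if both one-step extensions belong to `A`. -/
def Splits (A : Set (List Bool)) (t : List Bool) : Prop :=
  t ++ [false] ∈ A ∧ t ++ [true] ∈ A

/-- A perfect tree: a nonempty tree each of whose elements has a splitting extension in it. -/
def IsPerfect (T : Set (List Bool)) : Prop :=
  T.Nonempty ∧ IsTree T ∧ ∀ s ∈ T, ∃ t ∈ T, s <+: t ∧ Splits T t

/-- The cone `C_s`: all strings comparable with `s`. -/
def Cone (s : List Bool) : Set (List Bool) :=
  {t | s <+: t ∨ t <+: s}

/-- `T_s`: the elements of `T` comparable with `s`. -/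
def restrictTo (T : Set (List Bool)) (s : List Bool) : Set (List Bool) :=
  {t ∈ T | s <+: t ∨ t <+: s}

/-- The meet `A ∧ B`: the union of all perfect trees contained in `A ∩ B`. -/
def meet (A B : Set (List Bool)) : Set (List Bool) :=
  ⋃₀ {U | IsPerfect U ∧ U ⊆ A ∩ B}

theorem Splits.mono {A B : Set (List Bool)} {t : List Bool} (hAB : A ⊆ B) (ht : Splits A t) :
    Splits B t :=
  ⟨hAB ht.1, hAB ht.2⟩

theorem IsTree.sUnion {𝒰 : Set (Set (List Bool))} (h𝒰 : ∀ U ∈ 𝒰, IsTree U) :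
    IsTree (⋃₀ 𝒰) := by
  rintro s t hst ⟨U, hU, ht⟩
  exact ⟨U, hU, h𝒰 U hU hst ht⟩

theorem IsPerfect.sUnion {𝒰 : Set (Set (List Bool))} (hne : 𝒰.Nonempty)
    (h𝒰 : ∀ U ∈ 𝒰, IsPerfect U) : IsPerfect (⋃₀ 𝒰) := by
  refine ⟨?_, IsTree.sUnion fun U hU => (h𝒰 U hU).2.1, ?_⟩
  · obtain ⟨U, hU⟩ := hne
    exact (h𝒰 U hU).1.mono (Set.subset_sUnion_of_mem hU)
  · rintro s ⟨U, hU, hs⟩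
    obtain ⟨t, ht, hst, hsplit⟩ := (h𝒰 U hU).2.2 s hs
    exact ⟨t, ⟨U, hU, ht⟩, hst, hsplit.mono (Set.subset_sUnion_of_mem hU)⟩

theorem meet_subset_inter (A B : Set (List Bool)) : meet A B ⊆ A ∩ B :=
  Set.sUnion_subset fun _ hU => hU.2

theorem subset_meet {A B U : Set (List Bool)} (hU : IsPerfect U) (hUAB : U ⊆ A ∩ B) :
    U ⊆ meet A B :=
  Set.subset_sUnion_of_mem ⟨hU, hUAB⟩

theorem meet_isMaximalPerfect_general (T S : Set (List Bool))
    (h : ∃ U, IsPerfect U ∧ U ⊆ T ∩ S) :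
    IsPerfect (meet T S) ∧ meet T S ⊆ T ∩ S ∧
      ∀ U, IsPerfect U → U ⊆ T ∩ S → U ⊆ meet T S :=
  ⟨IsPerfect.sUnion h fun _ hU => hU.1, meet_subset_inter T S,
    fun _ hU hUTS => subset_meet hU hUTS⟩

/-- if some perfect tree is contained in `T ∩ S`, then `T ∧ S` is the
maximal perfect tree contained in `T ∩ S`. -/
theorem meet_isMaximalPerfect (T S : Set (List Bool))
    (hT : IsPerfect T) (hS : IsPerfect S)
    (h : ∃ U, IsPerfect U ∧ U ⊆ T ∩ S) :
    IsPerfect (meet T S) ∧ meet T S ⊆ T ∩ S ∧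
      ∀ U, IsPerfect U → U ⊆ T ∩ S → U ⊆ meet T S :=
  meet_isMaximalPerfect_general T S h
end

section
/- Let P and Q be perfect posets with P ⊆ Q, and let T, S ∈ P. Then T and S are compatible in Q if and only if T and S are compatible in P. -/
/-- A perfect poset: a collection of perfect trees containing all cones and
closed under unions and (nonempty) meets. -/
def PerfectPoset (P : Set (Set (List Bool))) : Prop :=
  (∀ T ∈ P, IsPerfect T) ∧
  (∀ s : List Bool, Cone s ∈ P) ∧
  (∀ T ∈ P, ∀ S ∈ P, T ∪ S ∈ P) ∧
  (∀ T ∈ P, ∀ S ∈ P, meet T S ≠ ∅ → meet T S ∈ P)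

/-- `T` and `S` are compatible in `P` if some `U ∈ P` is contained in both. -/
def CompatIn (P : Set (Set (List Bool))) (T S : Set (List Bool)) : Prop :=
  ∃ U ∈ P, U ⊆ T ∧ U ⊆ S

theorem subset_meet_of_isPerfect {A B U : Set (List Bool)} (hU : IsPerfect U)
    (hUA : U ⊆ A) (hUB : U ⊆ B) : U ⊆ meet A B :=
  Set.subset_sUnion_of_mem ⟨hU, Set.subset_inter hUA hUB⟩

theorem CompatIn.mono {P Q : Set (Set (List Bool))} {T S : Set (List Bool)} (hPQ : P ⊆ Q)
    (h : CompatIn P T S) : CompatIn Q T S :=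
  let ⟨U, hU, hUT, hUS⟩ := h
  ⟨U, hPQ hU, hUT, hUS⟩

theorem CompatIn.meet_nonempty {Q : Set (Set (List Bool))} {T S : Set (List Bool)}
    (hQ : ∀ U ∈ Q, IsPerfect U) (h : CompatIn Q T S) : (meet T S).Nonempty :=
  let ⟨U, hU, hUT, hUS⟩ := h
  (hQ U hU).1.mono (subset_meet_of_isPerfect (hQ U hU) hUT hUS)

theorem PerfectPoset.compatIn_of_meet_nonempty {P : Set (Set (List Bool))}
    {T S : Set (List Bool)} (hP : PerfectPoset P) (hT : T ∈ P) (hS : S ∈ P)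
    (h : (meet T S).Nonempty) : CompatIn P T S :=
  ⟨meet T S, hP.2.2.2 T hT S hS h.ne_empty,
    fun _ hx => (meet_subset_inter T S hx).1, fun _ hx => (meet_subset_inter T S hx).2⟩

/-- if `P ⊆ Q` are perfect posets, compatibility in `Q` coincides with
compatibility in `P` for elements of `P`. -/
theorem compat_absolute_between_perfect_posets
    (P Q : Set (Set (List Bool))) (hP : PerfectPoset P) (hQ : PerfectPoset Q)
    (hPQ : P ⊆ Q) (T S : Set (List Bool)) (hT : T ∈ P) (hS : S ∈ P) :
    CompatIn Q T S ↔ CompatIn P T S :=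
  ⟨fun h => hP.compatIn_of_meet_nonempty hT hS (h.meet_nonempty hQ.1), CompatIn.mono hPQ⟩
end

section
/- Let P be a perfect poset, let T, S ∈ P, and let s be a string with s ∈ T and s ∈ S. Then there exist U, U' ∈ P with U ⊆ T_s, U' ⊆ S_s, and U ∧ U' = ∅ (i.e., no perfect tree is contained in U ∩ U'). -/
/-!
Shrink `T` and `S` to members `A ⊆ T_s` and `B ⊆ S_s` of `P` (meets with the cone `C_s`). If
`A ∧ B = ∅` we are done. Otherwise `M = A ∧ B ∈ P` has a splitting node `t`, and the meets of `M`
with the cones above `t ++ [false]` and `t ++ [true]` work: a tree inside two cones over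
incomparable strings has bounded height, so it cannot be perfect.
-/

theorem restrictTo_eq_inter (T : Set (List Bool)) (s : List Bool) :
    restrictTo T s = T ∩ Cone s :=
  rfl

theorem meet_subset_left (A B : Set (List Bool)) : meet A B ⊆ A :=
  (meet_subset_inter A B).trans Set.inter_subset_left

theorem meet_subset_right (A B : Set (List Bool)) : meet A B ⊆ B :=
  (meet_subset_inter A B).trans Set.inter_subset_right

theorem meet_nonempty {A B W : Set (List Bool)} (hW : IsPerfect W) (h : W ⊆ A ∩ B) :
    (meet A B).Nonempty :=
  let ⟨x, hx⟩ := hW.1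
  ⟨x, W, ⟨hW, h⟩, hx⟩

theorem IsPerfect.exists_splits {T : Set (List Bool)} (hT : IsPerfect T) :
    ∃ t ∈ T, Splits T t :=
  let ⟨s, hs⟩ := hT.1
  let ⟨t, ht, _, hsplit⟩ := hT.2.2 s hs
  ⟨t, ht, hsplit⟩

theorem IsPerfect.exists_length_gt {T : Set (List Bool)} (hT : IsPerfect T) (n : ℕ) :
    ∃ x ∈ T, n < x.length := by
  induction n with
  | zero =>
    obtain ⟨t, -, h0, -⟩ := hT.exists_splits
    exact ⟨_, h0, by simp⟩
  | succ n ih =>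
    obtain ⟨x, hx, hn⟩ := ih
    obtain ⟨t, -, hxt, h0, -⟩ := hT.2.2 x hx
    exact ⟨_, h0, by simp only [List.length_append, List.length_singleton]; grind [hxt.length_le]⟩

theorem isPerfect_restrictTo {T : Set (List Bool)} (hT : IsPerfect T) {s : List Bool}
    (hs : s ∈ T) : IsPerfect (restrictTo T s) := by
  obtain ⟨-, htree, hsplit⟩ := hT
  have splits_above_s : ∀ u ∈ T, s <+: u →
      ∃ t ∈ restrictTo T s, u <+: t ∧ Splits (restrictTo T s) t := by
    intro u hu hsu
    obtain ⟨t, ht, hut, h0, h1⟩ := hsplit u hu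
    have hst := hsu.trans hut
    exact ⟨t, ⟨ht, .inl hst⟩, hut, ⟨h0, .inl (hst.trans (List.prefix_append _ _))⟩,
      ⟨h1, .inl (hst.trans (List.prefix_append _ _))⟩⟩
  refine ⟨⟨s, hs, .inl List.prefix_rfl⟩, ?_, ?_⟩
  · rintro u t hut ⟨ht, hst | hts⟩
    · exact ⟨htree hut ht, (List.prefix_or_prefix_of_prefix hut hst).symm⟩
    · exact ⟨htree hut ht, .inr (hut.trans hts)⟩
  · rintro u ⟨hu, hsu | hus⟩
    · exact splits_above_s u hu hsu
    · obtain ⟨t, ht, hst, hsplit⟩ := splits_above_s s hs List.prefix_rfl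
      exact ⟨t, ht, hus.trans hst, hsplit⟩

theorem prefix_of_mem_cone_of_incomparable {u v x : List Bool} (huv : ¬u <+: v)
    (hvu : ¬v <+: u) (hxu : x ∈ Cone u) (hxv : x ∈ Cone v) : x <+: u := by
  rcases hxu with hux | hxu
  · rcases hxv with hvx | hxv
    · exact (List.prefix_or_prefix_of_prefix hux hvx).elim (absurd · huv) (absurd · hvu)
    · exact absurd (hux.trans hxv) huv
  · exact hxu

theorem meet_eq_empty_of_subset_cone {A B : Set (List Bool)} {u v : List Bool}
    (hA : A ⊆ Cone u) (hB : B ⊆ Cone v) (huv : ¬u <+: v) (hvu : ¬v <+: u) :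
    meet A B = ∅ := by
  refine Set.not_nonempty_iff_eq_empty.1 fun ⟨_, W, ⟨hW, hWAB⟩, _⟩ => ?_
  obtain ⟨x, hxW, hx⟩ := hW.exists_length_gt u.length
  have hxu : x <+: u :=
    prefix_of_mem_cone_of_incomparable huv hvu (hA (hWAB hxW).1) (hB (hWAB hxW).2)
  exact absurd hxu.length_le hx.not_ge

namespace PerfectPoset

variable {P : Set (Set (List Bool))} (hP : PerfectPoset P)
include hP

theorem meet_mem {A B W : Set (List Bool)} (hA : A ∈ P) (hB : B ∈ P) (hW : IsPerfect W)
    (h : W ⊆ A ∩ B) : meet A B ∈ P :=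
  hP.2.2.2 A hA B hB (meet_nonempty hW h).ne_empty

theorem meet_cone_mem {T : Set (List Bool)} (hT : T ∈ P) {s : List Bool} (hs : s ∈ T) :
    meet T (Cone s) ∈ P :=
  hP.meet_mem hT (hP.2.1 s) (isPerfect_restrictTo (hP.1 T hT) hs)
    (restrictTo_eq_inter T s).subset

end PerfectPoset

/-- below a common node one can find incompatible refinements in `P`. -/
theorem exists_incompatible_below_node (P : Set (Set (List Bool)))
    (hP : PerfectPoset P) (T S : Set (List Bool)) (hT : T ∈ P) (hS : S ∈ P)
    (s : List Bool) (hsT : s ∈ T) (hsS : s ∈ S) :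
    ∃ U ∈ P, ∃ U' ∈ P, U ⊆ restrictTo T s ∧ U' ⊆ restrictTo S s ∧
      meet U U' = ∅ := by
  have hA := hP.meet_cone_mem hT hsT
  have hB := hP.meet_cone_mem hS hsS
  have hAT : meet T (Cone s) ⊆ restrictTo T s := meet_subset_inter T (Cone s)
  have hBS : meet S (Cone s) ⊆ restrictTo S s := meet_subset_inter S (Cone s)
  by_cases hAB : meet (meet T (Cone s)) (meet S (Cone s)) = ∅
  · exact ⟨_, hA, _, hB, hAT, hBS, hAB⟩
  set M := meet (meet T (Cone s)) (meet S (Cone s))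
  have hM : M ∈ P := hP.2.2.2 _ hA _ hB hAB
  obtain ⟨t, -, h0, h1⟩ := (hP.1 M hM).exists_splits
  refine ⟨_, hP.meet_cone_mem hM h0, _, hP.meet_cone_mem hM h1,
    ((meet_subset_left _ _).trans (meet_subset_left _ _)).trans hAT,
    ((meet_subset_left _ _).trans (meet_subset_right _ _)).trans hBS,
    meet_eq_empty_of_subset_cone (meet_subset_right _ _) (meet_subset_right _ _) ?_ ?_⟩ <;>
  simp [List.prefix_append_right_inj]
end

section
/- Let P be a perfect poset, let T, S ∈ P, and let m ∈ ℕ. Then there exist T', S' ∈ P such that T' ⊆ T, S' ⊆ S, T' has exactly the same nodes of length m as T, S' has exactly the same nodes of length m as S, and T' ∧ S' = ∅ (no perfect tree is contained in T' ∩ S'). -/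
/-! Nodes of `T` of length `m` are pushed up to pairwise incomparable extensions `u t ∈ T` and
`v s ∈ S`: distinct nodes of equal length have incomparable extensions anyway, and a common node
`t` is handled by a splitting node `w ⊇ t` of `T` together with a long extension of `t` in `S`,
which misses one of the two successors of `w`. Then `T' = ⋃ₜ T_{u t}` and `S' = ⋃ₛ S_{v s}`
lie in `P` and keep the level `m`, while `T' ∩ S'` consists of prefixes of the finitely many
`u t`, so it is finite and contains no perfect tree. -/

def level (T : Set (List Bool)) (m : ℕ) : Set (List Bool) :=
  {t ∈ T | t.length = m}

lemma level_finite (T : Set (List Bool)) (m : ℕ) : (level T m).Finite :=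
  (List.finite_length_eq Bool m).subset fun _ ht => ht.2

section Prefix

variable {a s t u v : List Bool}

lemma notMem_cone_of_not_prefix (h : ¬a <+: v) (hlen : a.length ≤ v.length) :
    v ∉ Cone a := by
  rintro (hav | hva)
  · exact h hav
  · exact h (hva.eq_of_length (le_antisymm hva.length_le hlen) ▸ List.prefix_refl v)

lemma notMem_cone_of_prefix_of_ne (hlen : t.length = s.length) (hne : t ≠ s)
    (htu : t <+: u) (hsv : s <+: v) : v ∉ Cone u := by
  have key : ∀ {x}, t <+: x → s <+: x → False := fun htx hsx =>
    hne ((List.prefix_of_prefix_length_le htx hsx hlen.le).eq_of_length hlen)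
  rintro (huv | hvu)
  · exact key (htu.trans huv) hsv
  · exact key htu (hsv.trans hvu)

lemma cone_inter_cone_subset_prefixes (h : v ∉ Cone u) :
    Cone u ∩ Cone v ⊆ {x | x <+: u} := by
  rintro x ⟨hux | hxu, hvx | hxv⟩
  · exact absurd (List.prefix_or_prefix_of_prefix hux hvx) h
  · exact absurd (Or.inl (hux.trans hxv)) h
  · exact absurd (Or.inr (hvx.trans hxu)) h
  · exact hxu

lemma prefixes_finite (u : List Bool) : {x | x <+: u}.Finite := by
  simpa only [List.mem_inits] using u.inits.finite_toSet

end Prefix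

namespace IsPerfect

variable {T S : Set (List Bool)}

lemma exists_prefix_lt_length (hT : IsPerfect T) {s : List Bool} (hs : s ∈ T) :
    ∃ v ∈ T, s <+: v ∧ s.length < v.length := by
  obtain ⟨w, -, hsw, -, hw⟩ := hT.2.2 s hs
  refine ⟨w ++ [true], hw, hsw.trans (List.prefix_append _ _), ?_⟩
  simpa using Nat.lt_succ_of_le hsw.length_le

lemma exists_prefix_le_length (hT : IsPerfect T) {s : List Bool} (hs : s ∈ T) (n : ℕ) :
    ∃ v ∈ T, s <+: v ∧ n ≤ v.length := by
  induction n with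
  | zero => exact ⟨s, hs, List.prefix_refl s, Nat.zero_le _⟩
  | succ n ih =>
    obtain ⟨v, hv, hsv, hn⟩ := ih
    obtain ⟨w, hw, hvw, hlt⟩ := hT.exists_prefix_lt_length hv
    exact ⟨w, hw, hsv.trans hvw, by omega⟩

lemma level_nonempty (hT : IsPerfect T) (m : ℕ) : (level T m).Nonempty := by
  obtain ⟨s, hs⟩ := hT.1
  obtain ⟨v, hv, -, hm⟩ := hT.exists_prefix_le_length hs m
  exact ⟨v.take m, hT.2.1 (List.take_prefix m v) hv, List.length_take_of_le hm⟩

lemma infinite (hT : IsPerfect T) : T.Infinite := by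
  intro hfin
  obtain ⟨s, hs, hmax⟩ := Set.exists_max_image T List.length hfin hT.1
  obtain ⟨v, hv, -, hlt⟩ := hT.exists_prefix_lt_length hs
  exact (hmax v hv).not_gt hlt

lemma restrictTo (hT : IsPerfect T) {s : List Bool} (hs : s ∈ T) :
    IsPerfect (restrictTo T s) := by
  obtain ⟨-, htree, hsplit⟩ := hT
  have split_above : ∀ x, s <+: x → x ∈ T → ∃ w ∈ _root_.restrictTo T s, x <+: w ∧
      Splits (_root_.restrictTo T s) w := fun x hsx hx => by
    obtain ⟨w, hw, hxw, h0, h1⟩ := hsplit x hx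
    have hsw := hsx.trans hxw
    exact ⟨w, ⟨hw, .inl hsw⟩, hxw, ⟨h0, .inl (hsw.trans (List.prefix_append _ _))⟩,
      ⟨h1, .inl (hsw.trans (List.prefix_append _ _))⟩⟩
  refine ⟨⟨s, hs, .inl (List.prefix_refl s)⟩, ?_, ?_⟩
  · rintro a b hab ⟨hb, hsb | hbs⟩
    · exact ⟨htree hab hb, (List.prefix_or_prefix_of_prefix hab hsb).symm⟩
    · exact ⟨htree hab hb, .inr (hab.trans hbs)⟩
  · rintro x ⟨hx, hsx | hxs⟩
    · exact split_above x hsx hx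
    · obtain ⟨w, hw, hsw, hsplit⟩ := split_above s (List.prefix_refl s) hs
      exact ⟨w, hw, hxs.trans hsw, hsplit⟩

lemma exists_prefix_notMem_cone (hT : IsPerfect T) (hS : IsPerfect S) {t : List Bool}
    (htT : t ∈ T) (htS : t ∈ S) :
    ∃ u ∈ T, ∃ v ∈ S, t <+: u ∧ t <+: v ∧ v ∉ Cone u := by
  obtain ⟨w, -, htw, hw0, hw1⟩ := hT.2.2 t htT
  obtain ⟨v, hv, htv, hlen⟩ := hS.exists_prefix_le_length htS (w.length + 1)
  -- the two successors of `w` have the same length, so at most one of them is a prefix of `v`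
  obtain ⟨b, hb, hbv⟩ : ∃ b, w ++ [b] ∈ T ∧ ¬w ++ [b] <+: v := by
    by_contra! h
    have := (List.prefix_of_prefix_length_le (h false hw0) (h true hw1) (by simp)).eq_of_length
      (by simp)
    simp at this
  exact ⟨w ++ [b], hb, v, hv, htw.trans (List.prefix_append _ _), htv,
    notMem_cone_of_not_prefix hbv (by simpa using hlen)⟩

lemma exists_extensions_of_level (hT : IsPerfect T) (hS : IsPerfect S) (m : ℕ) :
    ∃ u v : List Bool → List Bool, (∀ t ∈ level T m, u t ∈ T ∧ t <+: u t) ∧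
      (∀ s ∈ level S m, v s ∈ S ∧ s <+: v s) ∧
      ∀ t ∈ level T m, ∀ s ∈ level S m, v s ∉ Cone (u t) := by
  have key : ∀ t : List Bool, ∃ uv : List Bool × List Bool,
      (t ∈ T → uv.1 ∈ T ∧ t <+: uv.1) ∧ (t ∈ S → uv.2 ∈ S ∧ t <+: uv.2) ∧
      (t ∈ T → t ∈ S → uv.2 ∉ Cone uv.1) := fun t => by
    by_cases hts : t ∈ T ∧ t ∈ S
    · obtain ⟨u, hu, v, hv, htu, htv, huv⟩ := hT.exists_prefix_notMem_cone hS hts.1 hts.2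
      exact ⟨(u, v), fun _ => ⟨hu, htu⟩, fun _ => ⟨hv, htv⟩, fun _ _ => huv⟩
    · exact ⟨(t, t), fun h => ⟨h, List.prefix_refl t⟩, fun h => ⟨h, List.prefix_refl t⟩,
        fun h1 h2 => absurd ⟨h1, h2⟩ hts⟩
  choose uv huT hvS huv using key
  refine ⟨fun t => (uv t).1, fun s => (uv s).2, fun t ht => huT t ht.1,
    fun s hs => hvS s hs.1, ?_⟩
  rintro t ⟨htT, htm⟩ s ⟨hsS, hsm⟩
  by_cases hts : t = s
  · subst hts
    exact huv t htT hsS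
  · exact notMem_cone_of_prefix_of_ne (htm.trans hsm.symm) hts (huT t htT).2 (hvS s hsS).2

end IsPerfect

lemma meet_eq_inter_of_isPerfect {A B : Set (List Bool)} (h : IsPerfect (A ∩ B)) :
    meet A B = A ∩ B :=
  (Set.sUnion_subset fun _ hU => hU.2).antisymm (Set.subset_sUnion_of_mem ⟨h, subset_rfl⟩)

lemma meet_eq_empty_of_finite {A B : Set (List Bool)} (h : (A ∩ B).Finite) :
    meet A B = ∅ :=
  Set.sUnion_eq_empty.2 fun _ ⟨hU, hsub⟩ => absurd (h.subset hsub) hU.infinite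

namespace PerfectPoset

variable {P : Set (Set (List Bool))}

lemma restrictTo_mem (hP : PerfectPoset P) {T : Set (List Bool)} (hT : T ∈ P)
    {s : List Bool} (hs : s ∈ T) : restrictTo T s ∈ P := by
  have hmeet : meet T (Cone s) = restrictTo T s :=
    meet_eq_inter_of_isPerfect ((hP.1 T hT).restrictTo hs)
  rw [← hmeet]
  exact hP.2.2.2 T hT (Cone s) (hP.2.1 s)
    (hmeet ▸ Set.nonempty_iff_ne_empty.1 ⟨s, hs, .inl (List.prefix_refl s)⟩)

lemma biUnion_mem (hP : PerfectPoset P) {ι : Type*} {I : Set ι} (hI : I.Finite)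
    (hne : I.Nonempty) {f : ι → Set (List Bool)} (hf : ∀ i ∈ I, f i ∈ P) :
    ⋃ i ∈ I, f i ∈ P := by
  induction I, hI using Set.Finite.induction_on with
  | empty => exact absurd hne Set.not_nonempty_empty
  | @insert a I _ _ ih =>
    rw [Set.biUnion_insert]
    rcases I.eq_empty_or_nonempty with rfl | hI
    · simpa using hf a (Set.mem_insert a ∅)
    · exact hP.2.2.1 _ (hf a (Set.mem_insert a I)) _
        (ih hI fun i hi => hf i (Set.mem_insert_of_mem a hi))

lemma exists_refinement_keeping_level (hP : PerfectPoset P) {T : Set (List Bool)} (hT : T ∈ P)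
    {m : ℕ} {u : List Bool → List Bool} (hu : ∀ t ∈ level T m, u t ∈ T ∧ t <+: u t) :
    ∃ T' ∈ P, T' ⊆ T ∧ level T' m = level T m ∧ T' ⊆ ⋃ t ∈ level T m, Cone (u t) := by
  refine ⟨⋃ t ∈ level T m, restrictTo T (u t),
    hP.biUnion_mem (level_finite T m) ((hP.1 T hT).level_nonempty m)
      fun t ht => hP.restrictTo_mem hT (hu t ht).1,
    Set.iUnion₂_subset fun _ _ => Set.sep_subset _ _, ?_,
    Set.biUnion_mono subset_rfl fun _ _ => Set.sep_subset_ofPred _ _⟩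
  ext x
  refine ⟨fun ⟨hx, hxm⟩ => ?_, fun hx => ⟨Set.mem_biUnion hx ⟨hx.1, .inr (hu x hx).2⟩, hx.2⟩⟩
  obtain ⟨t, -, hxt⟩ := Set.mem_iUnion₂.1 hx
  exact ⟨hxt.1, hxm⟩

end PerfectPoset

/-- one can shrink `T` and `S` within `P`, preserving their nodes of
length `m`, so that the results have empty meet. -/
theorem exists_disjoint_refinements_preserving_level (P : Set (Set (List Bool)))
    (hP : PerfectPoset P) (T S : Set (List Bool)) (hT : T ∈ P) (hS : S ∈ P)
    (m : ℕ) :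
    ∃ T' ∈ P, ∃ S' ∈ P, T' ⊆ T ∧ S' ⊆ S ∧
      {t ∈ T' | t.length = m} = {t ∈ T | t.length = m} ∧
      {t ∈ S' | t.length = m} = {t ∈ S | t.length = m} ∧
      meet T' S' = ∅ := by
  obtain ⟨u, v, hu, hv, huv⟩ := (hP.1 T hT).exists_extensions_of_level (hP.1 S hS) m
  obtain ⟨T', hT'P, hT'T, hT'm, hT'u⟩ := hP.exists_refinement_keeping_level hT hu
  obtain ⟨S', hS'P, hS'S, hS'm, hS'v⟩ := hP.exists_refinement_keeping_level hS hv
  refine ⟨T', hT'P, S', hS'P, hT'T, hS'S, hT'm, hS'm, meet_eq_empty_of_finite ?_⟩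
  have hsub : T' ∩ S' ⊆ ⋃ t ∈ level T m, {x | x <+: u t} := by
    intro x ⟨hxT', hxS'⟩
    obtain ⟨t, ht, hxt⟩ := Set.mem_iUnion₂.1 (hT'u hxT')
    obtain ⟨s, hs, hxs⟩ := Set.mem_iUnion₂.1 (hS'v hxS')
    exact Set.mem_biUnion ht (cone_inter_cone_subset_prefixes (huv t ht s hs) ⟨hxt, hxs⟩)
  exact ((level_finite T m).biUnion fun t _ => prefixes_finite (u t)).subset hsub
end

section
/- Let P be a perfect poset and let k ∈ ℕ. Then the set D_k is dense in Q(P) (every condition in Q(P) has a lower bound in D_k) and downward closed in Q(P) (if (T', n') ≤ (T, n) and (T, n) ∈ D_k, then (T', n') ∈ D_k). -/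
/-- The ordering of the fusion poset `Q(P)`: `(T₂, n₂) ≤ (T₁, n₁)` iff `T₂ ⊆ T₁`,
`n₂ ≥ n₁`, and `T₂` and `T₁` have exactly the same nodes of length `n₁`. -/
def QLe (q p : Set (List Bool) × ℕ) : Prop :=
  q.1 ⊆ p.1 ∧ p.2 ≤ q.2 ∧ {t ∈ q.1 | t.length = p.2} = {t ∈ p.1 | t.length = p.2}

/-- The set `D_k`: conditions `(T, n)` with `n ≥ k` such that every node of `T` of
length `k` has an extension in `T` of length `< n` splitting in `T`. -/
def Dk (k : ℕ) (p : Set (List Bool) × ℕ) : Prop :=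
  k ≤ p.2 ∧ ∀ t ∈ p.1, t.length = k →
    ∃ u ∈ p.1, t <+: u ∧ u.length < p.2 ∧ Splits p.1 u

/-!
Density: in a perfect tree every one of the finitely many nodes of length `k` has a splitting
extension, so raising the height `n` above all of them puts `(T, n)` into `D_k` without changing
`T`. Downward closure: if `(T', n') ≤ (T, n)`, every node of `T` of length at most `n` extends to
a node of length exactly `n` (perfectness), which also lies in `T'`; so the splitting nodes of
length `< n` witnessing `(T, n) ∈ D_k` still split in `T'`.
-/

theorem IsPerfect.exists_extension_length_ge {T : Set (List Bool)} (hT : IsPerfect T) (m : ℕ)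
    {s : List Bool} (hs : s ∈ T) : ∃ t ∈ T, s <+: t ∧ m ≤ t.length := by
  induction m with
  | zero => exact ⟨s, hs, List.prefix_refl s, Nat.zero_le _⟩
  | succ m ih =>
    obtain ⟨t, ht, hst, hm⟩ := ih
    obtain ⟨u, -, htu, hsplit⟩ := hT.2.2 t ht
    refine ⟨u ++ [true], hsplit.2, hst.trans (htu.trans (List.prefix_append u _)), ?_⟩
    have := htu.length_le
    simp only [List.length_append, List.length_singleton]
    omega

theorem IsPerfect.exists_extension_length_eq {T : Set (List Bool)} (hT : IsPerfect T)
    {s : List Bool} (hs : s ∈ T) {n : ℕ} (hn : s.length ≤ n) :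
    ∃ t ∈ T, s <+: t ∧ t.length = n := by
  obtain ⟨t, ht, hst, hnt⟩ := hT.exists_extension_length_ge n hs
  exact ⟨t.take n, hT.2.1 (List.take_prefix n t) ht, List.prefix_take_iff.mpr ⟨hst, hn⟩,
    by simp [hnt]⟩

theorem IsPerfect.exists_splitting_extension_length_lt {T : Set (List Bool)} (hT : IsPerfect T)
    (k : ℕ) : ∃ N, ∀ t ∈ T, t.length = k → ∃ u ∈ T, t <+: u ∧ u.length < N ∧ Splits T u := by
  have hfin : {t ∈ T | t.length = k}.Finite :=
    (List.finite_length_eq Bool k).subset fun _ ht => ht.2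
  have hsplit : ∀ t ∈ {t ∈ T | t.length = k}, ∃ u ∈ T, t <+: u ∧ Splits T u :=
    fun t ht => hT.2.2 t ht.1
  choose! f hfT hpre hf using hsplit
  obtain ⟨N, hN⟩ := (hfin.image fun t => (f t).length).bddAbove
  refine ⟨N + 1, fun t ht hk => ⟨f t, hfT t ⟨ht, hk⟩, hpre t ⟨ht, hk⟩, ?_, hf t ⟨ht, hk⟩⟩⟩
  exact Nat.lt_succ_of_le (hN ⟨t, ⟨ht, hk⟩, rfl⟩)

theorem QLe_of_le (T : Set (List Bool)) {n n' : ℕ} (h : n ≤ n') : QLe (T, n') (T, n) :=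
  ⟨subset_rfl, h, rfl⟩

theorem QLe.mem_of_length_le {T T' : Set (List Bool)} {n n' : ℕ} (hle : QLe (T', n') (T, n))
    (hT : IsPerfect T) (hT' : IsTree T') {v : List Bool} (hv : v ∈ T) (hvn : v.length ≤ n) :
    v ∈ T' := by
  obtain ⟨w, hw, hvw, hwn⟩ := hT.exists_extension_length_eq hv hvn
  have hw' : w ∈ {t ∈ T' | t.length = n} := hle.2.2 ▸ ⟨hw, hwn⟩
  exact hT' hvw hw'.1

theorem Dk.of_QLe {k : ℕ} {T T' : Set (List Bool)} {n n' : ℕ} (hD : Dk k (T, n))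
    (hle : QLe (T', n') (T, n)) (hT : IsPerfect T) (hT' : IsTree T') : Dk k (T', n') := by
  refine ⟨hD.1.trans hle.2.1, fun t ht hk => ?_⟩
  obtain ⟨u, -, htu, hun, hsplit⟩ := hD.2 t (hle.1 ht) hk
  have hext : ∀ b : Bool, u ++ [b] ∈ T' := fun b =>
    have hb : u ++ [b] ∈ T := by cases b <;> [exact hsplit.1; exact hsplit.2]
    hle.mem_of_length_le hT hT' hb
      (by simp only [List.length_append, List.length_singleton]; omega)
  exact ⟨u, hT' (List.prefix_append u _) (hext true), htu, hun.trans_le hle.2.1,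
    hext false, hext true⟩

/-- each `D_k` is dense and downward closed in the fusion poset `Q(P)`. -/
theorem Dk_dense_and_downward_closed (P : Set (Set (List Bool)))
    (hP : PerfectPoset P) (k : ℕ) :
    (∀ T ∈ P, ∀ n : ℕ, ∃ T' ∈ P, ∃ n' : ℕ,
      QLe (T', n') (T, n) ∧ Dk k (T', n')) ∧
    (∀ T ∈ P, ∀ T' ∈ P, ∀ n n' : ℕ,
      QLe (T', n') (T, n) → Dk k (T, n) → Dk k (T', n')) := by
  refine ⟨fun T hT n => ?_, fun T hT T' hT' n n' hle hD =>
    hD.of_QLe hle (hP.1 T hT) (hP.1 T' hT').2.1⟩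
  obtain ⟨N, hN⟩ := (hP.1 T hT).exists_splitting_extension_length_lt k
  refine ⟨T, hT, max n (max k N), QLe_of_le T (le_max_left _ _),
    le_max_of_le_right (le_max_left _ _), fun t ht hk => ?_⟩
  obtain ⟨u, hu, htu, huN, hsplit⟩ := hN t ht hk
  exact ⟨u, hu, htu, huN.trans_le (le_max_of_le_right (le_max_right _ _)), hsplit⟩
end

section
/- Let P be a perfect poset and let F be a filter on Q(P) such that F ∩ D_k ≠ ∅ for every k ∈ ℕ. Define 𝕋_F to be the set of strings s such that there is (T, n) ∈ F with s ∈ T and length(s) ≤ n. Then 𝕋_F is a perfect tree, and 𝕋_F ⊆ T for every (T, n) ∈ F. -/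
/-!
Two conditions of a filter have a common extension `(R, m)`, and `R` keeps every node of length
`n` of a condition `(T, n)` above it. As `T` is perfect, every `s ∈ T` with `|s| ≤ n` lies below
such a node, so the strings of `T` of length `≤ n` survive into every tree of the filter: this
gives `𝕋_F ⊆ T`. Splitting nodes come from the conditions in `D_k`, since a splitting node `u`
of `(T, n) ∈ D_k` has `|u| < n`, so `u` and both its successors belong to `𝕋_F`.
-/

theorem IsPerfect.nil_mem {T : Set (List Bool)} (hT : IsPerfect T) : [] ∈ T :=
  let ⟨_, hs⟩ := hT.1
  hT.2.1 List.nil_prefix hs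

theorem IsPerfect.exists_prefix_le_length_s12 {T : Set (List Bool)} (hT : IsPerfect T) (n : ℕ)
    {s : List Bool} (hs : s ∈ T) : ∃ u ∈ T, s <+: u ∧ n ≤ u.length := by
  induction n with
  | zero => exact ⟨s, hs, List.prefix_refl s, Nat.zero_le _⟩
  | succ n ih =>
    obtain ⟨u, hu, hsu, hnu⟩ := ih
    obtain ⟨t, -, hut, -, htrue⟩ := hT.2.2 u hu
    refine ⟨t ++ [true], htrue, hsu.trans (hut.trans (List.prefix_append t [true])), ?_⟩
    simp only [List.length_append, List.length_singleton]
    have := hut.length_le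
    omega

theorem IsPerfect.exists_prefix_length_eq {T : Set (List Bool)} (hT : IsPerfect T)
    {s : List Bool} (hs : s ∈ T) {n : ℕ} (hn : s.length ≤ n) :
    ∃ u ∈ T, s <+: u ∧ u.length = n := by
  obtain ⟨u, hu, hsu, hnu⟩ := hT.exists_prefix_le_length_s12 n hs
  exact ⟨u.take n, hT.2.1 (List.take_prefix n u) hu, List.prefix_take_iff.2 ⟨hsu, hn⟩,
    by simp [hnu]⟩

theorem QLe.mem_of_mem {q r : Set (List Bool) × ℕ} (hrq : QLe r q) (hr : IsTree r.1)
    (hq : IsPerfect q.1) {s : List Bool} (hs : s ∈ q.1) (hlen : s.length ≤ q.2) : s ∈ r.1 := by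
  obtain ⟨u, hu, hsu, hulen⟩ := hq.exists_prefix_length_eq hs hlen
  have hur : u ∈ {t ∈ r.1 | t.length = q.2} := hrq.2.2 ▸ ⟨hu, hulen⟩
  exact hr hsu hur.1

/-- The tree `𝕋_F` generated by a set `F` of fusion conditions. -/
def fusionTree (F : Set (Set (List Bool) × ℕ)) : Set (List Bool) :=
  {s | ∃ p ∈ F, s ∈ p.1 ∧ s.length ≤ p.2}

section FusionTree

variable {F : Set (Set (List Bool) × ℕ)} (hF : ∀ p ∈ F, IsPerfect p.1)
include hF

theorem isTree_fusionTree : IsTree (fusionTree F) := by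
  rintro s t hst ⟨q, hq, htq, hlen⟩
  exact ⟨q, hq, (hF q hq).2.1 hst htq, hst.length_le.trans hlen⟩

theorem fusionTree_subset (hFdir : ∀ p ∈ F, ∀ q ∈ F, ∃ r ∈ F, QLe r p ∧ QLe r q)
    {p : Set (List Bool) × ℕ} (hp : p ∈ F) : fusionTree F ⊆ p.1 := by
  rintro s ⟨q, hq, hsq, hlen⟩
  obtain ⟨r, hr, hrp, hrq⟩ := hFdir p hp q hq
  exact hrp.1 (hrq.mem_of_mem (hF r hr).2.1 (hF q hq) hsq hlen)

theorem isPerfect_fusionTree (hFdir : ∀ p ∈ F, ∀ q ∈ F, ∃ r ∈ F, QLe r p ∧ QLe r q)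
    (hFD : ∀ k : ℕ, ∃ p ∈ F, Dk k p) : IsPerfect (fusionTree F) := by
  refine ⟨?_, isTree_fusionTree hF, ?_⟩
  · obtain ⟨p, hp, -⟩ := hFD 0
    exact ⟨[], p, hp, (hF p hp).nil_mem, Nat.zero_le _⟩
  · intro s hs
    obtain ⟨p, hp, hpD⟩ := hFD s.length
    obtain ⟨u, hu, hsu, hulen, hfalse, htrue⟩ := hpD.2 s (fusionTree_subset hF hFdir hp hs) rfl
    have hsucc : (u ++ [false]).length ≤ p.2 ∧ (u ++ [true]).length ≤ p.2 := by
      simp only [List.length_append, List.length_singleton]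
      omega
    exact ⟨u, ⟨p, hp, hu, hulen.le⟩, hsu, ⟨p, hp, hfalse, hsucc.1⟩, ⟨p, hp, htrue, hsucc.2⟩⟩

end FusionTree

theorem fusion_filter_gives_perfect_tree_general (P : Set (Set (List Bool)))
    (hP : PerfectPoset P) (F : Set (Set (List Bool) × ℕ))
    (hFsub : ∀ p ∈ F, p.1 ∈ P)
    (hFdir : ∀ p ∈ F, ∀ q ∈ F, ∃ r ∈ F, QLe r p ∧ QLe r q)
    (hFD : ∀ k : ℕ, ∃ p ∈ F, Dk k p) :
    IsPerfect {s | ∃ p ∈ F, s ∈ p.1 ∧ s.length ≤ p.2} ∧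
      ∀ p ∈ F, {s | ∃ q ∈ F, s ∈ q.1 ∧ s.length ≤ q.2} ⊆ p.1 := by
  have hF : ∀ p ∈ F, IsPerfect p.1 := fun p hp => hP.1 p.1 (hFsub p hp)
  exact ⟨isPerfect_fusionTree hF hFdir hFD, fun p hp => fusionTree_subset hF hFdir hp⟩

/-- a filter on `Q(P)` meeting every `D_k` yields a perfect tree `𝕋_F`
contained in every tree appearing in the filter. -/
theorem fusion_filter_gives_perfect_tree (P : Set (Set (List Bool)))
    (hP : PerfectPoset P) (F : Set (Set (List Bool) × ℕ))
    (hFsub : ∀ p ∈ F, p.1 ∈ P)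
    (hFne : F.Nonempty)
    (hFup : ∀ p ∈ F, ∀ q : Set (List Bool) × ℕ, q.1 ∈ P → QLe p q → q ∈ F)
    (hFdir : ∀ p ∈ F, ∀ q ∈ F, ∃ r ∈ F, QLe r p ∧ QLe r q)
    (hFD : ∀ k : ℕ, ∃ p ∈ F, Dk k p) :
    IsPerfect {s | ∃ p ∈ F, s ∈ p.1 ∧ s.length ≤ p.2} ∧
      ∀ p ∈ F, {s | ∃ q ∈ F, s ∈ q.1 ∧ s.length ≤ q.2} ⊆ p.1 :=
  fusion_filter_gives_perfect_tree_general P hP F hFsub hFdir hFD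
end

section
/- Let U, S₁, …, S_r (with r ≥ 1) be perfect trees and suppose U ⊆ S₁ ∪ ⋯ ∪ S_r. Then there exist an index i with 1 ≤ i ≤ r and a node u ∈ U such that U_u ⊆ S_i. -/
/-!
If no restriction `U_u` lies in `S i`, then every node of `U` has an extension in `U` outside
`S i`. As `S i` is closed under prefixes, a string outside `S i` stays outside under further
extension, so extending successively past each of the finitely many `S i` yields a node of `U`
outside all of them, contradicting `U ⊆ ⋃ i, S i`.
-/

theorem restrictTo_subset_iff {U S : Set (List Bool)} {u : List Bool} (hS : IsTree S)
    (hu : u ∈ U) : restrictTo U u ⊆ S ↔ ∀ t ∈ U, u <+: t → t ∈ S := by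
  refine ⟨fun h t ht hut => h ⟨ht, .inl hut⟩, fun h t ⟨ht, hcomp⟩ => ?_⟩
  rcases hcomp with hut | htu
  · exact h t ht hut
  · exact hS htu (h u hu List.prefix_rfl)

theorem exists_extension_forall_not_mem {ι : Type*} {U : Set (List Bool)}
    {S : ι → Set (List Bool)} (hS : ∀ i, IsTree (S i))
    (hescape : ∀ i, ∀ u ∈ U, ∃ t ∈ U, u <+: t ∧ t ∉ S i) (s : Finset ι) :
    ∀ u ∈ U, ∃ t ∈ U, u <+: t ∧ ∀ i ∈ s, t ∉ S i := by
  classical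
  induction s using Finset.induction_on with
  | empty => exact fun u hu => ⟨u, hu, List.prefix_rfl, by simp⟩
  | insert j s _ ih =>
    intro u hu
    obtain ⟨t, ht, hut, ht_avoid⟩ := ih u hu
    obtain ⟨t', ht', htt', ht'j⟩ := hescape j t ht
    refine ⟨t', ht', hut.trans htt', fun i hi => ?_⟩
    rcases Finset.mem_insert.mp hi with rfl | hi
    · exact ht'j
    · exact fun ht'i => ht_avoid i hi (hS i htt' ht'i)

theorem perfect_covered_by_finitely_many_general (r : ℕ)
    (U : Set (List Bool)) (S : Fin r → Set (List Bool))
    (hU : IsPerfect U) (hS : ∀ i, IsPerfect (S i))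
    (hsub : U ⊆ ⋃ i, S i) :
    ∃ i : Fin r, ∃ u ∈ U, restrictTo U u ⊆ S i := by
  by_contra! hnot
  have hescape : ∀ i, ∀ u ∈ U, ∃ t ∈ U, u <+: t ∧ t ∉ S i := fun i u hu => by
    simpa [restrictTo_subset_iff (hS i).2.1 hu] using hnot i u hu
  obtain ⟨u, hu⟩ := hU.1
  obtain ⟨t, ht, -, ht_avoid⟩ :=
    exists_extension_forall_not_mem (fun i => (hS i).2.1) hescape Finset.univ u hu
  obtain ⟨i, hti⟩ := Set.mem_iUnion.mp (hsub ht)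
  exact ht_avoid i (Finset.mem_univ i) hti

/-- if a perfect tree is covered by finitely many perfect trees, then
some restriction of it is contained in one of them. -/
theorem perfect_covered_by_finitely_many (r : ℕ) (hr : 1 ≤ r)
    (U : Set (List Bool)) (S : Fin r → Set (List Bool))
    (hU : IsPerfect U) (hS : ∀ i, IsPerfect (S i))
    (hsub : U ⊆ ⋃ i, S i) :
    ∃ i : Fin r, ∃ u ∈ U, restrictTo U u ⊆ S i :=
  perfect_covered_by_finitely_many_general r U S hU hS hsub
end

section
/- Let I be a type and let (O, ≤) be a linear order. Let S be an I-tree and let ⟨T_ξ⟩_{ξ ∈ O} be a family of I-trees such that: (i) the family is increasing, i.e., T_ξ ⊆ T_η whenever ξ ≤ η; (ii) S ⊆ T_ξ for every ξ ∈ O; (iii) S has no infinite branch and each T_ξ has no infinite branch; and (iv) for all ξ ≤ η in O, no element of T_η \ T_ξ properly extends an element of T_ξ \ S. Then the union ⋃_{ξ ∈ O} T_ξ has no infinite branch. -/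
/-- An `I`-tree: a set of finite sequences from `I` closed under initial segments. -/
def ITree {I : Type*} (T : Set (List I)) : Prop :=
  ∀ ⦃s t : List I⦄, s <+: t → t ∈ T → s ∈ T

/-- An infinite branch of a set of finite sequences: a function `x : ℕ → I` all of
whose finite initial segments belong to the set. -/
def HasInfBranch {I : Type*} (T : Set (List I)) : Prop :=
  ∃ x : ℕ → I, ∀ n : ℕ, (List.ofFn fun i : Fin n => x i) ∈ T

/-!
Follow a branch `x` of the union. Since `S` has no branch, some initial segment `x|N` lies
outside `S`, and it lies in some `T ξ`. Every later segment is in some `T η`; if `η ≤ ξ` it is in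
`T ξ` by monotonicity, and if `ξ ≤ η` it cannot be new in `T η`, since it properly extends
`x|N ∈ T ξ \ S`. Hence all segments from `N` on, and by closure under prefixes all of them,
lie in `T ξ`, contradicting that `T ξ` has no branch.
-/

section

variable {I : Type*}

def initSeg (x : ℕ → I) (n : ℕ) : List I := List.ofFn fun i : Fin n => x i

@[simp]
theorem length_initSeg (x : ℕ → I) (n : ℕ) : (initSeg x n).length = n := List.length_ofFn

theorem initSeg_prefix_initSeg (x : ℕ → I) {m n : ℕ} (h : m ≤ n) :
    initSeg x m <+: initSeg x n := by
  have : initSeg x m = (initSeg x n).take m :=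
    List.ext_getElem (by simp [h]) fun i _ _ => by simp [initSeg]
  exact this ▸ List.take_prefix m _

theorem initSeg_ne_initSeg_succ (x : ℕ → I) (n : ℕ) : initSeg x n ≠ initSeg x (n + 1) :=
  fun h => by simpa using congrArg List.length h

theorem HasInfBranch.of_forall_ge {T : Set (List I)} (hT : ITree T) (x : ℕ → I) (N : ℕ)
    (hx : ∀ n, N ≤ n → initSeg x n ∈ T) : HasInfBranch T :=
  ⟨x, fun n => (le_total N n).elim (hx n) fun h => hT (initSeg_prefix_initSeg x h) (hx N le_rfl)⟩

theorem ITree.initSeg_notMem {S : Set (List I)} (hS : ITree S) (x : ℕ → I) {N n : ℕ}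
    (hN : initSeg x N ∉ S) (h : N ≤ n) : initSeg x n ∉ S :=
  fun hn => hN (hS (initSeg_prefix_initSeg x h) hn)

end

section

variable {I O : Type*} [LinearOrder O]

theorem mem_of_properPrefix_of_notMem {S : Set (List I)} {T : O → Set (List I)}
    (hmono : ∀ ξ η : O, ξ ≤ η → T ξ ⊆ T η)
    (hnew : ∀ ξ η : O, ξ ≤ η → ∀ t ∈ T η, t ∉ T ξ →
      ∀ s ∈ T ξ, s ∉ S → ¬(s <+: t ∧ s ≠ t))
    {ξ : O} {s t : List I} (hs : s ∈ T ξ) (hsS : s ∉ S) (hst : s <+: t) (hne : s ≠ t)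
    (ht : t ∈ ⋃ η, T η) : t ∈ T ξ := by
  obtain ⟨η, htη⟩ := Set.mem_iUnion.1 ht
  rcases le_total η ξ with hle | hle
  · exact hmono η ξ hle htη
  · by_contra htξ
    exact hnew ξ η hle t htη htξ s hs hsS ⟨hst, hne⟩

end

theorem union_of_branchless_trees_general {I : Type*} {O : Type*} [LinearOrder O]
    (S : Set (List I)) (T : O → Set (List I))
    (hS : ITree S) (hT : ∀ ξ, ITree (T ξ))
    (hmono : ∀ ξ η : O, ξ ≤ η → T ξ ⊆ T η)
    (hSnb : ¬ HasInfBranch S)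
    (hTnb : ∀ ξ, ¬ HasInfBranch (T ξ))
    (hnew : ∀ ξ η : O, ξ ≤ η → ∀ t ∈ T η, t ∉ T ξ →
      ∀ s ∈ T ξ, s ∉ S → ¬(s <+: t ∧ s ≠ t)) :
    ¬ HasInfBranch (⋃ ξ, T ξ) := by
  rintro ⟨x, hx⟩
  obtain ⟨N, hN⟩ : ∃ N, initSeg x N ∉ S := by
    by_contra! h
    exact hSnb ⟨x, h⟩
  obtain ⟨ξ, hξ⟩ := Set.mem_iUnion.1 (hx N)
  refine hTnb ξ (HasInfBranch.of_forall_ge (hT ξ) x N fun n hn => ?_)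
  induction n, hn using Nat.le_induction with
  | base => exact hξ
  | succ n hn ih =>
    exact mem_of_properPrefix_of_notMem hmono hnew ih (hS.initSeg_notMem x hN hn)
      (initSeg_prefix_initSeg x n.le_succ) (initSeg_ne_initSeg_succ x n) (hx (n + 1))

/-- an increasing union of branchless trees over a linear order, where
no new element ever properly extends an old element outside the common base `S`,
has no infinite branch. -/
theorem union_of_branchless_trees {I : Type*} {O : Type*} [LinearOrder O]
    (S : Set (List I)) (T : O → Set (List I))
    (hS : ITree S) (hT : ∀ ξ, ITree (T ξ))
    (hmono : ∀ ξ η : O, ξ ≤ η → T ξ ⊆ T η)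
    (hbase : ∀ ξ, S ⊆ T ξ)
    (hSnb : ¬ HasInfBranch S)
    (hTnb : ∀ ξ, ¬ HasInfBranch (T ξ))
    (hnew : ∀ ξ η : O, ξ ≤ η → ∀ t ∈ T η, t ∉ T ξ →
      ∀ s ∈ T ξ, s ∉ S → ¬(s <+: t ∧ s ≠ t)) :
    ¬ HasInfBranch (⋃ ξ, T ξ) :=
  union_of_branchless_trees_general S T hS hT hmono hSnb hTnb hnew
end
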